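/- arXiv:1708.02523 — 4 statements merged into one kernel-verified Lean document; each statement's English description precedes it below -/
import Mathlib

section
/- For every integer n ≥ 0, there are no integers x, y such that -(2n+4)x² - 2xy - 8y² = -2. -/
theorem stmt_0 (n : ℤ) (hn : 0 ≤ n) :
    ¬ ∃ x y : ℤ, -(2 * n + 4) * x ^ 2 - 2 * x * y - 8 * y ^ 2 = -2 := by
  rintro ⟨x, y, h⟩
  have h1 : (n + 2) * x ^ 2 + x * y + 4 * y ^ 2 = 1 := by linarith
  rcases eq_or_ne x 0 with hx | hx
  · subst hx; simp at h1; omega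
  · have hx2 : 1 ≤ x ^ 2 := by rcases lt_or_gt_of_ne hx with h'|h' <;> nlinarith
    nlinarith [sq_nonneg (x + y), sq_nonneg (x - y), sq_nonneg y, mul_nonneg hn (sq_nonneg x)]
end

section
/- Let G be the group presented by generators γ₁, γ₂, γ₃, …, γ_m (with m = n+3, n ≥ 0) and relations: γ₂ = γ₃⁻¹γ₂⁻¹γ₁γ₂γ₃, γ₁ = γ₂, (γ₁γ₂⋯γ_{m-1}) γ_m (γ₁γ₂⋯γ_{m-1})⁻¹ = γ₂, and γ_j = γ_{j+1} for j = 3, …, m-1. Then G is isomorphic to ℤ. -/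
/-!
Read in any group, the relators give `γ₁ = γ₂`, `γ₃ = ⋯ = γ_m`, and then (first relator)
that `γ₂` commutes with `γ₃`. So `γ₃` commutes with `γ₁ ⋯ γ_{m-1}`, and the third relator
collapses to `γ_m = γ₂`: all generators coincide. Every relator has exponent sum zero, so the
exponent-sum map to `ℤ` descends to the presented group, where it is inverse to `k ↦ γ₂ ^ k`.
-/

/-- Generator `γ_{i+1}` (1-based in the paper) is `FreeGroup.of i` (0-based). -/
def gamma (n : ℕ) (i : Fin (n + 3)) : FreeGroup (Fin (n + 3)) := FreeGroup.of i

/-- The product `γ₁ γ₂ ⋯ γ_{m-1}` with `m = n + 3`. -/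
def frontProd (n : ℕ) : FreeGroup (Fin (n + 3)) :=
  (List.ofFn fun i : Fin (n + 2) => gamma n i.castSucc).prod

/-- Relations of the Zariski–van Kampen presentation of `π₁(D⁴ ∖ S₂(n))`:
`γ₂ = γ₃⁻¹γ₂⁻¹γ₁γ₂γ₃`, `γ₁ = γ₂`,
`(γ₁⋯γ_{m-1}) γ_m (γ₁⋯γ_{m-1})⁻¹ = γ₂`, and `γ_j = γ_{j+1}` for `j = 3, …, m-1`. -/
def rels₂ (n : ℕ) : Set (FreeGroup (Fin (n + 3))) :=
  {r | r = gamma n 1 *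
            ((gamma n 2)⁻¹ * (gamma n 1)⁻¹ * gamma n 0 * gamma n 1 * gamma n 2)⁻¹ ∨
       r = gamma n 0 * (gamma n 1)⁻¹ ∨
       r = frontProd n * gamma n (Fin.last (n + 2)) * (frontProd n)⁻¹ * (gamma n 1)⁻¹ ∨
       ∃ j : Fin n, r = gamma n ⟨j.val + 2, by omega⟩ * (gamma n ⟨j.val + 3, by omega⟩)⁻¹}

namespace FreeGroup

def exponentSum {α : Type*} : FreeGroup α →* Multiplicative ℤ :=
  lift fun _ => Multiplicative.ofAdd 1

end FreeGroup

namespace PresentedGroup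

variable {α : Type*} {rels : Set (FreeGroup α)}

theorem lift_of_eq_one_of_mem {r : FreeGroup α} (hr : r ∈ rels) :
    FreeGroup.lift (of : α → PresentedGroup rels) r = 1 := by
  rw [FreeGroup.ext_hom (FreeGroup.lift of) (mk rels) fun _ => FreeGroup.lift_apply_of]
  exact one_of_mem hr

def mulEquivMultiplicativeInt (a : α) (hsum : ∀ r ∈ rels, FreeGroup.exponentSum r = 1)
    (heq : ∀ i, (of i : PresentedGroup rels) = of a) : PresentedGroup rels ≃* Multiplicative ℤ :=
  have of_eq (i : α) : toGroup (f := fun _ => Multiplicative.ofAdd 1) hsum (of i) =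
      Multiplicative.ofAdd 1 :=
    toGroup.of hsum
  MonoidHom.toMulEquiv (toGroup hsum) (zpowersHom _ (of a))
    (ext fun i => by simp [of_eq, heq i])
    (MonoidHom.ext_mint <| by simp [of_eq])

end PresentedGroup

namespace rels₂

theorem exponentSum_eq_one {n : ℕ} {r : FreeGroup (Fin (n + 3))} (hr : r ∈ rels₂ n) :
    FreeGroup.exponentSum r = 1 := by
  rcases hr with rfl | rfl | rfl | ⟨j, rfl⟩ <;>
    simp [FreeGroup.exponentSum, gamma, mul_inv_cancel_comm]

variable {G : Type*} [Group G] {n : ℕ} {x : Fin (n + 3) → G}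

theorem apply_zero_eq_apply_one (hx : ∀ r ∈ rels₂ n, FreeGroup.lift x r = 1) : x 0 = x 1 := by
  simpa [gamma, mul_inv_eq_one] using hx _ (Or.inr (Or.inl rfl))

theorem apply_eq_apply_two (hx : ∀ r ∈ rels₂ n, FreeGroup.lift x r = 1) :
    ∀ (k : ℕ) (hk : k + 2 < n + 3), x ⟨k + 2, hk⟩ = x 2
  | 0, _ => congrArg x (Fin.ext (Nat.mod_eq_of_lt (by omega)).symm)
  | k + 1, hk => by
    have h := hx _ (Or.inr (Or.inr (Or.inr ⟨⟨k, by omega⟩, rfl⟩)))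
    simp only [gamma, map_mul, map_inv, FreeGroup.lift_apply_of, mul_inv_eq_one] at h
    exact h.symm.trans (apply_eq_apply_two hx k (by omega))

theorem commute_apply_two_apply_one (hx : ∀ r ∈ rels₂ n, FreeGroup.lift x r = 1) :
    Commute (x 2) (x 1) := by
  have h := hx _ (Or.inl rfl)
  simp only [gamma, map_mul, map_inv, FreeGroup.lift_apply_of, mul_inv_eq_one,
    apply_zero_eq_apply_one hx] at h
  rw [inv_mul_cancel_right, mul_assoc] at h
  exact eq_inv_mul_iff_mul_eq.mp h

theorem apply_eq_apply_one_or_apply_two (hx : ∀ r ∈ rels₂ n, FreeGroup.lift x r = 1)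
    (i : Fin (n + 3)) : x i = x 1 ∨ x i = x 2 := by
  rcases i with ⟨_ | _ | k, hi⟩
  · exact .inl (apply_zero_eq_apply_one hx)
  · exact .inl rfl
  · exact .inr (apply_eq_apply_two hx k hi)

theorem commute_apply_two_lift_frontProd (hx : ∀ r ∈ rels₂ n, FreeGroup.lift x r = 1) :
    Commute (x 2) (FreeGroup.lift x (frontProd n)) := by
  rw [frontProd, map_list_prod]
  refine Commute.list_prod_right _ _ fun y hy => ?_
  rw [List.map_ofFn] at hy
  obtain ⟨i, rfl⟩ := List.mem_ofFn.mp hy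
  rcases apply_eq_apply_one_or_apply_two hx i.castSucc with h | h
  · simpa [gamma, h] using commute_apply_two_apply_one hx
  · simp [gamma, h]

theorem apply_two_eq_apply_one (hx : ∀ r ∈ rels₂ n, FreeGroup.lift x r = 1) : x 2 = x 1 := by
  have h := hx _ (Or.inr (Or.inr (Or.inl rfl)))
  simp only [gamma, map_mul, map_inv, FreeGroup.lift_apply_of, mul_inv_eq_one] at h
  rwa [show x (Fin.last (n + 2)) = x 2 from apply_eq_apply_two hx n (by omega),
    ← (commute_apply_two_lift_frontProd hx).eq, mul_inv_cancel_right] at h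

theorem apply_eq_apply_one (hx : ∀ r ∈ rels₂ n, FreeGroup.lift x r = 1) (i : Fin (n + 3)) :
    x i = x 1 :=
  (apply_eq_apply_one_or_apply_two hx i).elim id (·.trans (apply_two_eq_apply_one hx))

end rels₂

theorem stmt_7 (n : ℕ) :
    Nonempty (PresentedGroup (rels₂ n) ≃* Multiplicative ℤ) :=
  ⟨PresentedGroup.mulEquivMultiplicativeInt 1 (fun _ => rels₂.exponentSum_eq_one)
    (rels₂.apply_eq_apply_one fun _ => PresentedGroup.lift_of_eq_one_of_mem)⟩
end

section
/- For every integer n ≥ 0, there is no matrix P ∈ GL₂(ℤ) such that Pᵀ · [[-2n-4, -1], [-1, -8]] · P has some diagonal entry equal to -2. Equivalently, the integral quadratic form with matrix [[-2n-4, -1], [-1, -8]] is not ℤ-equivalent to any integral form representing -2. -/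
/-! Every diagonal entry of `Pᵀ A P` is a value `Q(a, b)` of the form of `A`, and
`-Q(a, b) = (2n + 3) a² + (a + b)² + 7 b²`. This is at least `7` when `b ≠ 0` and equals
`(2n + 4) a² ∈ {0} ∪ [4, ∞)` when `b = 0`, so `Q` never takes the value `-2`. -/

open Matrix

theorem dotProduct_mulVec_fin_two_symm {R : Type*} [CommRing R] (p q r : R) (v : Fin 2 → R) :
    v ⬝ᵥ !![p, q; q, r] *ᵥ v = p * v 0 ^ 2 + 2 * q * v 0 * v 1 + r * v 1 ^ 2 := by
  simp only [dotProduct, mulVec, Fin.sum_univ_two, of_apply, cons_val', cons_val_zero,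
    cons_val_one, empty_val', cons_val_fin_one]
  ring

theorem form_ne_neg_two {n : ℤ} (hn : 0 ≤ n) (a b : ℤ) :
    (-2 * n - 4) * a ^ 2 + 2 * -1 * a * b + -8 * b ^ 2 ≠ -2 := by
  have hsos : (-2 * n - 4) * a ^ 2 + 2 * -1 * a * b + -8 * b ^ 2
      = -((2 * n + 3) * a ^ 2 + (a + b) ^ 2 + 7 * b ^ 2) := by ring
  have hn_a : 0 ≤ n * a ^ 2 := mul_nonneg hn (sq_nonneg a)
  rw [hsos]
  rcases eq_or_ne b 0 with rfl | hb
  · rcases eq_or_ne a 0 with rfl | ha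
    · norm_num
    · have : 0 < a ^ 2 := by positivity
      linarith
  · have : 0 < b ^ 2 := by positivity
    linarith [sq_nonneg a, sq_nonneg (a + b)]

theorem stmt_11 (n : ℤ) (hn : 0 ≤ n) :
    ¬ ∃ (P : Matrix.GeneralLinearGroup (Fin 2) ℤ) (i : Fin 2),
      ((P : Matrix (Fin 2) (Fin 2) ℤ)ᵀ * !![-2 * n - 4, -1; -1, -8] *
        (P : Matrix (Fin 2) (Fin 2) ℤ)) i i = -2 := by
  rintro ⟨P, i, h⟩
  rw [mul_mul_apply, dotProduct_mulVec_fin_two_symm] at h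
  exact form_ne_neg_two hn _ _ h
end

section
/- Let n ≥ 0. Suppose M is a symmetric 2×2 integer matrix such that the associated quadratic form v ↦ vᵀMv takes the value -2 at some integer vector, and let Q(n) = [[-2n-4, -1], [-1, -8]]. Then M and Q(n) are not congruent over ℤ. -/
open Matrix

theorem stmt_16 (n : ℤ) (hn : 0 ≤ n) (M : Matrix (Fin 2) (Fin 2) ℤ)
    (hsymm : Mᵀ = M)
    (hrep : ∃ v : Fin 2 → ℤ, v ⬝ᵥ M.mulVec v = -2) :
    ¬ ∃ P : Matrix.GeneralLinearGroup (Fin 2) ℤ,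
      (P : Matrix (Fin 2) (Fin 2) ℤ)ᵀ * !![-2 * n - 4, -1; -1, -8] *
        (P : Matrix (Fin 2) (Fin 2) ℤ) = M := by
  rintro ⟨P, rfl⟩
  obtain ⟨v, hv⟩ := hrep
  set Pm : Matrix (Fin 2) (Fin 2) ℤ := (P : Matrix (Fin 2) (Fin 2) ℤ)
  set w : Fin 2 → ℤ := Pm.mulVec v with hw
  have hrw : (Pmᵀ * !![-2 * n - 4, -1; -1, -8] * Pm) *ᵥ v
      = Pmᵀ *ᵥ (!![-2 * n - 4, -1; -1, -8] *ᵥ w) := by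
    rw [hw, Matrix.mulVec_mulVec, Matrix.mulVec_mulVec, Matrix.mul_assoc]
  rw [hrw, Matrix.dotProduct_mulVec, Matrix.vecMul_transpose, ← hw] at hv
  set a := w 0
  set b := w 1
  have key : (-2 * n - 4) * a ^ 2 + (-2) * a * b + (-8) * b ^ 2 = -2 := by
    simp [dotProduct, Matrix.mulVec, Fin.sum_univ_two] at hv
    linear_combination hv
  have sq1 : ∀ k : ℤ, k = 0 ∨ 1 ≤ k ^ 2 := by
    intro k
    rcases eq_or_ne k 0 with h | h
    · exact Or.inl h
    · right
      have h1 := Int.one_le_abs h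
      nlinarith [abs_nonneg k, sq_abs k]
  rcases sq1 a with ha | ha
  · rcases sq1 b with hb | hb
    · rw [ha, hb] at key; norm_num at key
    · rw [ha] at key; nlinarith
  · nlinarith [sq_nonneg (a + b), ha, mul_nonneg hn (sq_nonneg a), sq_nonneg b]
end
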